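/- arXiv:2110.11783 — 5 statements merged into one kernel-verified Lean document; each statement's English description precedes it below -/
import Mathlib

section
/- Let O ⊆ ℝⁿ be an open convex set, F : O → ℝⁿ a C¹ vector field whose flow φ_t is defined for all t ≥ 0 on O, and C ⊆ ℝⁿ a 2-solid cone of rank 2. If the system x' = F(x) is C-cooperative on O, then the flow φ_t is strongly monotone with respect to C: for all p, q ∈ O, if q − p ∈ C and t ≥ 0 then φ_t(q) − φ_t(p) ∈ C, and if moreover p ≠ q and t > 0 then φ_t(q) − φ_t(p) ∈ Int C. -/
/-!
The difference `v t = φ t q - φ t p` of two trajectories solves the linear equation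
`v' = A(t) v` with `A = A_F^{pq}`, because of the mean value identity
`A(t) (φ t q - φ t p) = F (φ t q) - F (φ t p)`. Linear equations with continuous coefficients
have unique global solutions, so `v t = U(t) (q - p)`, and cooperativity puts this into
`Int C` for `t > 0` as soon as `q ≠ p`.

For a linear field, Picard–Lindelöf gives solutions on every interval of length
`1 / (2 sup ‖A‖)`, whatever the initial value. Gluing these gives solutions on every
`[t₀ - k, t₀ + k]`, which agree by uniqueness and so patch into a solution on `ℝ`.
-/

noncomputable section

/-- `A_F^{pq}(t) = ∫₀¹ DF(s φ_t(p) + (1−s) φ_t(q)) ds`. -/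
def lineA (n : ℕ) (F : (Fin n → ℝ) → (Fin n → ℝ))
    (φ : ℝ → (Fin n → ℝ) → (Fin n → ℝ)) (p q : Fin n → ℝ) (t : ℝ) :
    (Fin n → ℝ) →L[ℝ] (Fin n → ℝ) :=
  ∫ s in (0:ℝ)..1, fderiv ℝ F (s • φ t p + (1 - s) • φ t q)

/-- `U` is the fundamental solution of `dU/dt = A(t) U`, `U(0) = I` (for `t ≥ 0`). -/
def IsFundamental (n : ℕ) (A U : ℝ → (Fin n → ℝ) →L[ℝ] (Fin n → ℝ)) : Prop :=
  U 0 = ContinuousLinearMap.id ℝ (Fin n → ℝ) ∧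
    ∀ t : ℝ, 0 ≤ t → HasDerivAt U ((A t).comp (U t)) t

/-- `C` is a cone of rank 2 in ℝⁿ. -/
def IsRank2Cone (n : ℕ) (C : Set (Fin n → ℝ)) : Prop :=
  C.Nonempty ∧ IsClosed C ∧ (∀ (α : ℝ), ∀ x ∈ C, α • x ∈ C) ∧
  (∃ W : Submodule ℝ (Fin n → ℝ), Module.finrank ℝ W = 2 ∧ (W : Set (Fin n → ℝ)) ⊆ C) ∧
  (∀ W : Submodule ℝ (Fin n → ℝ), (W : Set (Fin n → ℝ)) ⊆ C → Module.finrank ℝ W ≤ 2)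

/-- `C` is 2-solid. -/
def IsTwoSolid (n : ℕ) (C : Set (Fin n → ℝ)) : Prop :=
  ∃ W : Submodule ℝ (Fin n → ℝ), Module.finrank ℝ W = 2 ∧
    ∀ v ∈ W, v ≠ 0 → v ∈ interior C

open Set Filter Topology MeasureTheory intervalIntegral Metric
open scoped NNReal

section IntegralCurve

variable {E : Type*} [NormedAddCommGroup E] [NormedSpace ℝ E] {γ γ' : ℝ → E}
  {v : ℝ → E → E} {s s₁ s₂ : Set ℝ}

theorem IsIntegralCurveOn.congr (h : IsIntegralCurveOn γ v s) (hs : EqOn γ' γ s) :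
    IsIntegralCurveOn γ' v s := fun t ht ↦ by
  rw [hs ht]
  exact (h t ht).congr_of_mem hs ht

theorem IsIntegralCurveOn.union_of_isClosed (hs₁ : IsClosed s₁) (hs₂ : IsClosed s₂)
    (h₁ : IsIntegralCurveOn γ v s₁) (h₂ : IsIntegralCurveOn γ v s₂) :
    IsIntegralCurveOn γ v (s₁ ∪ s₂) := by
  have within {s : Set ℝ} (hs : IsClosed s) (h : IsIntegralCurveOn γ v s) (t : ℝ) :
      HasDerivWithinAt γ (v t (γ t)) s t := by
    by_cases ht : t ∈ s
    · exact h t ht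
    · exact HasFDerivWithinAt.of_notMem_closure (by rwa [hs.closure_eq])
  exact fun t _ ↦ (within hs₁ h₁ t).union (within hs₂ h₂ t)

theorem IsIntegralCurveOn.exists_glue_Icc {a b c : ℝ} {γ₁ γ₂ : ℝ → E}
    (h₁ : IsIntegralCurveOn γ₁ v (Icc a b)) (hab : a ≤ b) (hbc : b ≤ c)
    (h₂ : IsIntegralCurveOn γ₂ v (Icc b c)) (hb : γ₁ b = γ₂ b) :
    ∃ γ, EqOn γ γ₁ (Icc a b) ∧ EqOn γ γ₂ (Icc b c) ∧ IsIntegralCurveOn γ v (Icc a c) := by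
  classical
  set γ := fun t ↦ if t ≤ b then γ₁ t else γ₂ t
  have e₁ : EqOn γ γ₁ (Icc a b) := fun t ht ↦ if_pos ht.2
  have e₂ : EqOn γ γ₂ (Icc b c) := fun t ht ↦ by
    rcases ht.1.eq_or_lt with rfl | hlt
    · simp [γ, hb]
    · simp [γ, not_le.2 hlt]
  refine ⟨γ, e₁, e₂, ?_⟩
  rw [← Icc_union_Icc_eq_Icc hab hbc]
  exact (h₁.congr e₁).union_of_isClosed isClosed_Icc isClosed_Icc (h₂.congr e₂)

end IntegralCurve

theorem IsCompact.exists_forall_nnnorm_le {X G : Type*} [TopologicalSpace X]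
    [SeminormedAddCommGroup G] {f : X → G} {s : Set X} (hs : IsCompact s)
    (hf : ContinuousOn f s) : ∃ K : ℝ≥0, ∀ x ∈ s, ‖f x‖₊ ≤ K := by
  obtain ⟨K, hK⟩ := (hs.image_of_continuousOn hf.nnnorm).bddAbove
  exact ⟨K, fun x hx ↦ hK (mem_image_of_mem _ hx)⟩

section LinearODE

variable {E : Type*} [NormedAddCommGroup E] [NormedSpace ℝ E] {A : ℝ → E →L[ℝ] E}

theorem IsIntegralCurveOn.eqOn_Icc_linear {a b t₀ : ℝ} {f g : ℝ → E}
    (hA : ContinuousOn A (Icc a b)) (hf : IsIntegralCurveOn f (fun t ↦ A t) (Icc a b))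
    (hg : IsIntegralCurveOn g (fun t ↦ A t) (Icc a b)) (ht₀ : t₀ ∈ Icc a b)
    (h : f t₀ = g t₀) : EqOn f g (Icc a b) := by
  obtain ⟨K, hK⟩ := isCompact_Icc.exists_forall_nnnorm_le hA
  have hLip {s : Set ℝ} (hs : s ⊆ Icc a b) (t : ℝ) (ht : t ∈ s) :
      LipschitzOnWith K (A t) univ :=
    ((A t).lipschitz.weaken (hK t (hs ht))).lipschitzOnWith
  intro t ht
  rcases le_total t₀ t with h' | h'
  · have hsub : Icc t₀ b ⊆ Icc a b := Icc_subset_Icc_left ht₀.1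
    have right {γ : ℝ → E} (hγ : IsIntegralCurveOn γ (fun t ↦ A t) (Icc a b)) (s : ℝ)
        (hs : s ∈ Ico t₀ b) : HasDerivWithinAt γ (A s (γ s)) (Ici s) s :=
      (hγ s (hsub (Ico_subset_Icc_self hs))).mono_of_mem_nhdsWithin
        (Icc_mem_nhdsGE_of_mem ⟨ht₀.1.trans hs.1, hs.2⟩)
    exact ODE_solution_unique_of_mem_Icc_right (s := fun _ ↦ univ)
      (hLip (Ico_subset_Icc_self.trans hsub)) (hf.continuousOn.mono hsub) (right hf)
      (fun _ _ ↦ mem_univ _) (hg.continuousOn.mono hsub) (right hg) (fun _ _ ↦ mem_univ _) h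
      ⟨h', ht.2⟩
  · have hsub : Icc a t₀ ⊆ Icc a b := Icc_subset_Icc_right ht₀.2
    have left {γ : ℝ → E} (hγ : IsIntegralCurveOn γ (fun t ↦ A t) (Icc a b)) (s : ℝ)
        (hs : s ∈ Ioc a t₀) : HasDerivWithinAt γ (A s (γ s)) (Iic s) s :=
      (hγ s (hsub (Ioc_subset_Icc_self hs))).mono_of_mem_nhdsWithin
        (Icc_mem_nhdsLE_of_mem ⟨hs.1, hs.2.trans ht₀.2⟩)
    exact ODE_solution_unique_of_mem_Icc_left (s := fun _ ↦ univ)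
      (hLip (Ioc_subset_Icc_self.trans hsub)) (hf.continuousOn.mono hsub) (left hf)
      (fun _ _ ↦ mem_univ _) (hg.continuousOn.mono hsub) (left hg) (fun _ _ ↦ mem_univ _) h
      ⟨ht.1, h'⟩

variable [CompleteSpace E]

theorem exists_isIntegralCurveOn_Icc_linear_of_short {a b t₀ : ℝ} {K : ℝ≥0}
    (ht₀ : t₀ ∈ Icc a b) (hA : ContinuousOn A (Icc a b)) (hK : ∀ t ∈ Icc a b, ‖A t‖₊ ≤ K)
    (hshort : 2 * K * (b - a) ≤ 1) (x : E) :
    ∃ γ, γ t₀ = x ∧ IsIntegralCurveOn γ (fun t ↦ A t) (Icc a b) := by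
  -- On the ball of radius `‖x‖` about `x` the field is bounded by `2 K ‖x‖`.
  have hpl : IsPicardLindelof (fun t ↦ A t) (⟨t₀, ht₀⟩ : Icc a b) x ‖x‖₊ 0
      (2 * K * ‖x‖₊) K := by
    refine ⟨fun t ht ↦ ((A t).lipschitz.weaken (hK t ht)).lipschitzOnWith,
      fun y _ ↦ hA.clm_apply continuousOn_const, fun t ht y hy ↦ ?_, ?_⟩
    · have hy' : ‖y‖ ≤ 2 * ‖x‖ := by
        linarith [norm_le_of_mem_closedBall hy, coe_nnnorm x]
      calc ‖A t y‖ ≤ ‖A t‖ * ‖y‖ := (A t).le_opNorm y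
        _ ≤ K * (2 * ‖x‖) := mul_le_mul (hK t ht) hy' (norm_nonneg _) K.2
        _ = ↑(2 * K * ‖x‖₊) := by push_cast; ring
    · have hmax : max (b - t₀) (t₀ - a) ≤ b - a :=
        max_le (by linarith [ht₀.1]) (by linarith [ht₀.2])
      push_cast
      calc 2 * K * ‖x‖ * max (b - t₀) (t₀ - a) ≤ 2 * K * ‖x‖ * (b - a) := by gcongr
        _ = 2 * K * (b - a) * ‖x‖ := by ring
        _ ≤ ‖x‖ - 0 := by nlinarith [norm_nonneg x]
  obtain ⟨γ, hγ₀, hγ⟩ := hpl.exists_eq_forall_mem_Icc_hasDerivWithinAt₀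
  exact ⟨γ, hγ₀, hγ⟩

theorem exists_isIntegralCurveOn_closedBall_linear_extend {t₀ r r' : ℝ} {K : ℝ≥0}
    (hr : 0 ≤ r) (hrr' : r ≤ r') (hA : ContinuousOn A (closedBall t₀ r'))
    (hK : ∀ t ∈ closedBall t₀ r', ‖A t‖₊ ≤ K) (hshort : 2 * K * (r' - r) ≤ 1) {x : E}
    (h : ∃ γ, γ t₀ = x ∧ IsIntegralCurveOn γ (fun t ↦ A t) (closedBall t₀ r)) :
    ∃ γ, γ t₀ = x ∧ IsIntegralCurveOn γ (fun t ↦ A t) (closedBall t₀ r') := by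
  rw [Real.closedBall_eq_Icc] at hA hK h ⊢
  obtain ⟨γ, hγ₀, hγ⟩ := h
  have short {a b : ℝ} (hsub : Icc a b ⊆ Icc (t₀ - r') (t₀ + r')) (hab : b - a = r' - r)
      {t₁ : ℝ} (ht₁ : t₁ ∈ Icc a b) (y : E) :
      ∃ γ, γ t₁ = y ∧ IsIntegralCurveOn γ (fun t ↦ A t) (Icc a b) :=
    exists_isIntegralCurveOn_Icc_linear_of_short ht₁ (hA.mono hsub) (fun t ht ↦ hK t (hsub ht))
      (by rwa [hab]) y
  obtain ⟨γᵣ, hγᵣ₀, hγᵣ⟩ := short (Icc_subset_Icc (by linarith) le_rfl) (by ring)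
    (left_mem_Icc.2 (by linarith : t₀ + r ≤ t₀ + r')) (γ (t₀ + r))
  obtain ⟨γ', e, -, hγ'⟩ := hγ.exists_glue_Icc (by linarith) (by linarith) hγᵣ hγᵣ₀.symm
  obtain ⟨γₗ, hγₗ₀, hγₗ⟩ := short (Icc_subset_Icc le_rfl (by linarith)) (by ring)
    (right_mem_Icc.2 (by linarith : t₀ - r' ≤ t₀ - r)) (γ' (t₀ - r))
  obtain ⟨Γ, -, e', hΓ⟩ := hγₗ.exists_glue_Icc (by linarith) (by linarith) hγ' hγₗ₀
  refine ⟨Γ, ?_, hΓ⟩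
  rw [e' ⟨by linarith, by linarith⟩, e ⟨by linarith, by linarith⟩, hγ₀]

theorem exists_isIntegralCurveOn_closedBall_linear {t₀ R : ℝ} (hR : 0 ≤ R)
    (hA : ContinuousOn A (closedBall t₀ R)) (x : E) :
    ∃ γ, γ t₀ = x ∧ IsIntegralCurveOn γ (fun t ↦ A t) (closedBall t₀ R) := by
  obtain ⟨K, hK⟩ := (isCompact_closedBall t₀ R).exists_forall_nnnorm_le hA
  set δ : ℝ := 1 / (2 * K + 1)
  have hδ : 0 < δ := by positivity
  have hKδ : 2 * K * δ ≤ 1 := by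
    rw [mul_one_div, div_le_one (by positivity)]
    linarith
  have step : ∀ k : ℕ, ∀ r ∈ Icc 0 R, r ≤ k * δ →
      ∃ γ, γ t₀ = x ∧ IsIntegralCurveOn γ (fun t ↦ A t) (closedBall t₀ r) := by
    intro k
    induction k with
    | zero =>
      intro r hr hrk
      obtain rfl : r = 0 := le_antisymm (by simpa using hrk) hr.1
      have hsub : closedBall t₀ 0 ⊆ closedBall t₀ R := closedBall_subset_closedBall hR
      rw [Real.closedBall_eq_Icc] at hsub ⊢
      exact exists_isIntegralCurveOn_Icc_linear_of_short (K := K) ⟨by simp, by simp⟩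
        (hA.mono hsub) (fun t ht ↦ hK t (hsub ht)) (by simp) x
    | succ k ih =>
      intro r hr hrk
      have hsub : closedBall t₀ r ⊆ closedBall t₀ R := closedBall_subset_closedBall hr.2
      refine exists_isIntegralCurveOn_closedBall_linear_extend (le_max_left 0 (r - δ))
        (max_le hr.1 (by linarith)) (hA.mono hsub) (fun t ht ↦ hK t (hsub ht)) ?_
        (ih _ ⟨le_max_left _ _, max_le hR (by linarith [hr.2])⟩ (max_le (by positivity) ?_))
      · calc 2 * K * (r - max 0 (r - δ)) ≤ 2 * K * δ := by
              gcongr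
              linarith [le_max_right 0 (r - δ)]
          _ ≤ 1 := hKδ
      · push_cast at hrk
        linarith
  refine step ⌈R / δ⌉₊ R ⟨hR, le_rfl⟩ ?_
  rw [← div_le_iff₀ hδ]
  exact Nat.le_ceil _

theorem exists_isIntegralCurve_linear (hA : Continuous A) (t₀ : ℝ) (x : E) :
    ∃ γ, γ t₀ = x ∧ IsIntegralCurve γ (fun t ↦ A t) := by
  choose γ hγ₀ hγ using fun k : ℕ ↦
    exists_isIntegralCurveOn_closedBall_linear (t₀ := t₀) k.cast_nonneg hA.continuousOn x
  have agree {k m : ℕ} (hkm : k ≤ m) : EqOn (γ m) (γ k) (closedBall t₀ k) := by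
    have hγm := (hγ m).mono (closedBall_subset_closedBall (x := t₀) (Nat.cast_le.2 hkm))
    have hγk := hγ k
    rw [Real.closedBall_eq_Icc] at hγm hγk ⊢
    exact hγm.eqOn_Icc_linear hA.continuousOn hγk
      ⟨by linarith [k.cast_nonneg (α := ℝ)], by linarith [k.cast_nonneg (α := ℝ)]⟩
      ((hγ₀ m).trans (hγ₀ k).symm)
  set N : ℝ → ℕ := fun t ↦ ⌈dist t t₀⌉₊ + 1
  have hN (t : ℝ) : dist t t₀ < N t := by
    simpa [N] using (Nat.le_ceil (dist t t₀)).trans_lt (lt_add_one _)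
  have hΓ {k : ℕ} {t : ℝ} (ht : dist t t₀ ≤ k) : γ (N t) t = γ k t := by
    rcases le_total k (N t) with hk | hk
    · exact agree hk ht
    · exact (agree hk (hN t).le).symm
  refine ⟨fun t ↦ γ (N t) t, (hΓ (k := 0) (t := t₀) (by simp)).trans (hγ₀ 0), fun t ↦ ?_⟩
  have hball : ball t₀ (N t) ∈ 𝓝 t := isOpen_ball.mem_nhds (hN t)
  have hderiv := (hγ (N t) t (ball_subset_closedBall (hN t))).hasDerivAt
    (mem_of_superset hball ball_subset_closedBall)
  refine hderiv.congr_of_eventuallyEq ?_ |>.congr_deriv (by rw [hΓ (hN t).le])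
  filter_upwards [hball] with s hs using hΓ (le_of_lt hs)

theorem exists_fundamental_solution (hA : Continuous A) :
    ∃ U : ℝ → E →L[ℝ] E, U 0 = ContinuousLinearMap.id ℝ E ∧
      ∀ t, HasDerivAt U ((A t).comp (U t)) t := by
  obtain ⟨U, hU₀, hU⟩ := exists_isIntegralCurve_linear
    ((ContinuousLinearMap.compL ℝ E E E).continuous.comp hA) 0 (ContinuousLinearMap.id ℝ E)
  exact ⟨U, hU₀, hU⟩

end LinearODE

theorem continuousOn_parametric_intervalIntegral_of_continuousOn {X G : Type*}
    [TopologicalSpace X] [NormedAddCommGroup G] [NormedSpace ℝ G] {f : X → ℝ → G}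
    {S : Set X} {a b : ℝ} (hab : a ≤ b)
    (hf : ContinuousOn (Function.uncurry f) (S ×ˢ Icc a b)) :
    ContinuousOn (fun x ↦ ∫ s in a..b, f x s) S := by
  have hg : Continuous (Function.uncurry fun (x : S) s ↦ f x (projIcc a b hab s)) :=
    hf.comp_continuous (f := fun z : S × ℝ ↦ ((z.1 : X), (projIcc a b hab z.2 : ℝ)))
      (by fun_prop) fun z ↦ ⟨z.1.2, (projIcc a b hab z.2).2⟩
  rw [continuousOn_iff_continuous_domRestrict]
  convert continuous_parametric_intervalIntegral_of_continuous' (μ := volume) hg a b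
    using 2 with x
  refine integral_congr fun s hs ↦ ?_
  rw [uIcc_of_le hab] at hs
  simp [projIcc_of_mem hab hs]

theorem Convex.intervalIntegral_fderiv_apply_sub {E G : Type*} [NormedAddCommGroup E]
    [NormedSpace ℝ E] [NormedAddCommGroup G] [NormedSpace ℝ G] [CompleteSpace G] {O : Set E}
    (hO : IsOpen O) (hOconv : Convex ℝ O) {f : E → G} (hf : ContDiffOn ℝ 1 f O) {x y : E}
    (hx : x ∈ O) (hy : y ∈ O) :
    (∫ s in (0 : ℝ)..1, fderiv ℝ f (s • x + (1 - s) • y)) (y - x) = f y - f x := by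
  set ℓ : ℝ → E := fun s ↦ s • x + (1 - s) • y
  have hℓO : ∀ s ∈ uIcc (0 : ℝ) 1, ℓ s ∈ O := fun s hs ↦ by
    rw [uIcc_of_le zero_le_one] at hs
    exact hOconv hx hy hs.1 (sub_nonneg.2 hs.2) (add_sub_cancel _ _)
  have hℓ (s : ℝ) : HasDerivAt ℓ (x - y) s := by
    convert ((hasDerivAt_id' s).smul_const x).add
      (((hasDerivAt_id' s).const_sub 1).smul_const y) using 1
    · funext r
      simp [ℓ, sub_eq_add_neg]
    · simp [sub_eq_add_neg]
  have hDf : ContinuousOn (fun s ↦ fderiv ℝ f (ℓ s)) (uIcc 0 1) :=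
    (hf.continuousOn_fderiv_of_isOpen hO le_rfl).comp (by fun_prop) hℓO
  have hFTC : ∫ s in (0 : ℝ)..1, fderiv ℝ f (ℓ s) (x - y) = f x - f y := by
    convert integral_eq_sub_of_hasDerivAt (f := f ∘ ℓ) (fun s hs ↦
      ((hf.differentiableOn one_ne_zero).differentiableAt
        (hO.mem_nhds (hℓO s hs))).hasFDerivAt.comp_hasDerivAt s (hℓ s))
      ((ContinuousLinearMap.apply ℝ G (x - y)).continuous.comp_continuousOn hDf
        |>.intervalIntegrable) using 1
    simp [ℓ]
  rw [← neg_sub x y, map_neg, ContinuousLinearMap.intervalIntegral_apply hDf.intervalIntegrable,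
    hFTC, neg_sub]

section Flow

variable {n : ℕ} {O : Set (Fin n → ℝ)} {F : (Fin n → ℝ) → (Fin n → ℝ)}
  {φ : ℝ → (Fin n → ℝ) → (Fin n → ℝ)} {p q : Fin n → ℝ}

theorem continuousOn_lineA (hO : IsOpen O) (hOconv : Convex ℝ O) (hF : ContDiffOn ℝ 1 F O)
    (hφO : ∀ x ∈ O, ∀ t : ℝ, 0 ≤ t → φ t x ∈ O)
    (hφd : ∀ x ∈ O, ∀ t : ℝ, 0 ≤ t → HasDerivAt (fun τ ↦ φ τ x) (F (φ t x)) t)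
    (hp : p ∈ O) (hq : q ∈ O) : ContinuousOn (lineA n F φ p q) (Ici 0) := by
  have hcurve {x : Fin n → ℝ} (hx : x ∈ O) :
      ContinuousOn (fun z : ℝ × ℝ ↦ φ z.1 x) (Ici 0 ×ˢ Icc 0 1) := fun z hz ↦
    ((hφd x hx z.1 hz.1).continuousAt.comp continuousAt_fst).continuousWithinAt
  refine continuousOn_parametric_intervalIntegral_of_continuousOn zero_le_one ?_
  refine (hF.continuousOn_fderiv_of_isOpen hO le_rfl).comp
    ((continuousOn_snd.smul (hcurve hp)).add
      ((continuousOn_const.sub continuousOn_snd).smul (hcurve hq))) ?_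
  rintro ⟨t, s⟩ ⟨ht, hs⟩
  exact hOconv (hφO p hp t ht) (hφO q hq t ht) hs.1 (sub_nonneg.2 hs.2) (add_sub_cancel _ _)

theorem hasDerivAt_flow_sub (hO : IsOpen O) (hOconv : Convex ℝ O) (hF : ContDiffOn ℝ 1 F O)
    (hφO : ∀ x ∈ O, ∀ t : ℝ, 0 ≤ t → φ t x ∈ O)
    (hφd : ∀ x ∈ O, ∀ t : ℝ, 0 ≤ t → HasDerivAt (fun τ ↦ φ τ x) (F (φ t x)) t)
    (hp : p ∈ O) (hq : q ∈ O) {t : ℝ} (ht : 0 ≤ t) :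
    HasDerivAt (fun τ ↦ φ τ q - φ τ p) (lineA n F φ p q t (φ t q - φ t p)) t := by
  rw [lineA, hOconv.intervalIntegral_fderiv_apply_sub hO hF (hφO p hp t ht) (hφO q hq t ht)]
  exact (hφd q hq t ht).sub (hφd p hp t ht)

end Flow

theorem exists_isFundamental {n : ℕ} {A : ℝ → (Fin n → ℝ) →L[ℝ] (Fin n → ℝ)}
    (hA : ContinuousOn A (Ici 0)) : ∃ U, IsFundamental n A U := by
  -- `IsFundamental` asks for a two-sided derivative at `0`, hence the extension to `t < 0`.
  obtain ⟨U, hU₀, hU⟩ := exists_fundamental_solution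
    (hA.comp_continuous (continuous_id.max continuous_const) fun t ↦ le_max_right t 0)
  exact ⟨U, hU₀, fun t ht ↦ by simpa only [Function.comp_apply, id, max_eq_left ht] using hU t⟩

theorem IsFundamental.apply_eq {n : ℕ} {A U : ℝ → (Fin n → ℝ) →L[ℝ] (Fin n → ℝ)}
    (hU : IsFundamental n A U) (hA : ContinuousOn A (Ici 0)) {γ : ℝ → Fin n → ℝ}
    (hγ : ∀ t, 0 ≤ t → HasDerivAt γ (A t (γ t)) t) {t : ℝ} (ht : 0 ≤ t) :
    U t (γ 0) = γ t := by
  have hw : IsIntegralCurveOn (fun s ↦ U s (γ 0)) (fun s ↦ A s) (Icc 0 t) := fun s hs ↦ by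
    simpa using ((hU.2 s hs.1).clm_apply (hasDerivAt_const s (γ 0))).hasDerivWithinAt
  exact hw.eqOn_Icc_linear (hA.mono Icc_subset_Ici_self)
    (fun s hs ↦ (hγ s hs.1).hasDerivWithinAt) (left_mem_Icc.2 ht) (by simp [hU.1])
    (right_mem_Icc.2 ht)

theorem stmt7_general (n : ℕ) (O : Set (Fin n → ℝ)) (hO : IsOpen O) (hOconv : Convex ℝ O)
    (F : (Fin n → ℝ) → (Fin n → ℝ)) (hF : ContDiffOn ℝ 1 F O)
    (φ : ℝ → (Fin n → ℝ) → (Fin n → ℝ))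
    (hφ0 : ∀ x ∈ O, φ 0 x = x)
    (hφO : ∀ x ∈ O, ∀ t : ℝ, 0 ≤ t → φ t x ∈ O)
    (hφd : ∀ x ∈ O, ∀ t : ℝ, 0 ≤ t → HasDerivAt (fun τ => φ τ x) (F (φ t x)) t)
    (C : Set (Fin n → ℝ))
    (hcoop : ∀ p ∈ O, ∀ q ∈ O, ∀ U, IsFundamental n (lineA n F φ p q) U →
      ∀ t : ℝ, 0 < t → ∀ v ∈ C, v ≠ 0 → U t v ∈ interior C) :
    ∀ p ∈ O, ∀ q ∈ O, q - p ∈ C →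
      (∀ t : ℝ, 0 ≤ t → φ t q - φ t p ∈ C) ∧
      (p ≠ q → ∀ t : ℝ, 0 < t → φ t q - φ t p ∈ interior C) := by
  intro p hp q hq hpq
  have hA := continuousOn_lineA hO hOconv hF hφO hφd hp hq
  obtain ⟨U, hU⟩ := exists_isFundamental hA
  have hflow {t : ℝ} (ht : 0 ≤ t) : U t (q - p) = φ t q - φ t p := by
    simpa [hφ0 p hp, hφ0 q hq] using
      hU.apply_eq hA (fun τ hτ ↦ hasDerivAt_flow_sub hO hOconv hF hφO hφd hp hq hτ) ht
  have hint {t : ℝ} (ht : 0 < t) (hpq' : q - p ≠ 0) : φ t q - φ t p ∈ interior C :=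
    hflow ht.le ▸ hcoop p hp q hq U hU t ht _ hpq hpq'
  refine ⟨fun t ht ↦ ?_, fun hne t ht ↦ hint ht (sub_ne_zero.2 hne.symm)⟩
  rcases ht.eq_or_lt with rfl | ht
  · simpa [hφ0 p hp, hφ0 q hq] using hpq
  by_cases hqp : q - p = 0
  · rwa [← hflow ht.le, hqp, map_zero, ← hqp]
  · exact interior_subset (hint ht hqp)

/-- a `C`-cooperative system has a flow that is strongly monotone
with respect to the 2-solid cone `C` of rank 2. -/
theorem stmt7 (n : ℕ) (O : Set (Fin n → ℝ)) (hO : IsOpen O) (hOconv : Convex ℝ O)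
    (F : (Fin n → ℝ) → (Fin n → ℝ)) (hF : ContDiffOn ℝ 1 F O)
    (φ : ℝ → (Fin n → ℝ) → (Fin n → ℝ))
    (hφ0 : ∀ x ∈ O, φ 0 x = x)
    (hφO : ∀ x ∈ O, ∀ t : ℝ, 0 ≤ t → φ t x ∈ O)
    (hφd : ∀ x ∈ O, ∀ t : ℝ, 0 ≤ t → HasDerivAt (fun τ => φ τ x) (F (φ t x)) t)
    (C : Set (Fin n → ℝ)) (hC : IsRank2Cone n C) (hCsolid : IsTwoSolid n C)
    (hcoop : ∀ p ∈ O, ∀ q ∈ O, ∀ U, IsFundamental n (lineA n F φ p q) U →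
      ∀ t : ℝ, 0 < t → ∀ v ∈ C, v ≠ 0 → U t v ∈ interior C) :
    ∀ p ∈ O, ∀ q ∈ O, q - p ∈ C →
      (∀ t : ℝ, 0 ≤ t → φ t q - φ t p ∈ C) ∧
      (p ≠ q → ∀ t : ℝ, 0 < t → φ t q - φ t p ∈ interior C) :=
  stmt7_general n O hO hOconv F hF φ hφ0 hφO hφd C hcoop
end
end

section
/- Let F₀ : ℝ³ → ℝ³ be the vector field F₀(x,y,z) = (x − y − (3/2)xz² − x(x²+y²)/2, x + y − (3/2)yz² − y(x²+y²)/2, −z − z³/2 − (3/2)z(x²+y²)), let DF₀(ξ) denote its Jacobian matrix at ξ, and let P = diag(−1, −1, 1). Then for every ξ = (x,y,z) ∈ ℝ³ and every real λ satisfying 3(x² + y² + z²) − 2 < λ < 3(x² + y² + z²) + 2, the symmetric matrix P·DF₀(ξ) + DF₀(ξ)ᵀ·P + λ·P is negative definite. -/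
/-!
Write `ξ = (x, y, z)`, `r² = x² + y²`, `ρ² = r² + z²` and `w = (v₀, v₁)`. Because `P` flips the
sign of the `z`-coordinate, the mixed terms of the quadratic form between `w` and `v₂` cancel,
leaving `2(x v₀ + y v₁)² − (λ + 2 − 3z² − r²)|w|² − (2 + 3ρ² − λ) v₂²`. Cauchy–Schwarz bounds the
first term by `2 r² |w|²`, so the form is at most `−(λ − 3ρ² + 2)|w|² − (3ρ² + 2 − λ) v₂²`, whose
two coefficients are negative exactly on the range of `λ` in the statement.
-/

open Matrix

noncomputable section

/-- The limiting vector field `F₀` on ℝ³. -/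
def F₀ : (Fin 3 → ℝ) → (Fin 3 → ℝ) := fun v =>
  ![v 0 - v 1 - (3/2) * v 0 * (v 2)^2 - v 0 * ((v 0)^2 + (v 1)^2) / 2,
    v 0 + v 1 - (3/2) * v 1 * (v 2)^2 - v 1 * ((v 0)^2 + (v 1)^2) / 2,
    -(v 2) - (v 2)^3 / 2 - (3/2) * v 2 * ((v 0)^2 + (v 1)^2)]

/-- The Jacobian matrix of `F₀` at a point `ξ`. -/
def JacF₀ (ξ : Fin 3 → ℝ) : Matrix (Fin 3) (Fin 3) ℝ :=
  Matrix.of fun i j => fderiv ℝ F₀ ξ (Pi.single j 1) i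

/-- `P = diag(−1, −1, 1)`. -/
def P : Matrix (Fin 3) (Fin 3) ℝ := Matrix.diagonal ![-1, -1, 1]

lemma differentiable_F₀ : Differentiable ℝ F₀ := by
  intro ξ
  rw [differentiableAt_pi]
  intro i
  fin_cases i <;>
    simp only [F₀, Fin.isValue, Fin.zero_eta, Fin.mk_one, Fin.reduceFinMk, cons_val_zero, cons_val_one,
      cons_val] <;>
    fun_prop

lemma jacF₀_apply (ξ : Fin 3 → ℝ) (i j : Fin 3) :
    JacF₀ ξ i j = fderiv ℝ (fun v => F₀ v i) ξ (Pi.single j 1) := by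
  rw [JacF₀, of_apply, fderiv_apply (differentiable_F₀ ξ)]
  rfl

lemma jacF₀_eq (ξ : Fin 3 → ℝ) :
    JacF₀ ξ =
      !![1 - (3/2) * (ξ 2)^2 - (3 * (ξ 0)^2 + (ξ 1)^2) / 2, -1 - ξ 0 * ξ 1, -3 * ξ 0 * ξ 2;
        1 - ξ 0 * ξ 1, 1 - (3/2) * (ξ 2)^2 - ((ξ 0)^2 + 3 * (ξ 1)^2) / 2, -3 * ξ 1 * ξ 2;
        -3 * ξ 0 * ξ 2, -3 * ξ 1 * ξ 2, -1 - (3/2) * (ξ 2)^2 - (3/2) * ((ξ 0)^2 + (ξ 1)^2)] := by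
  have fderiv_coord (i : Fin 3) :
      fderiv ℝ (fun v : Fin 3 → ℝ => v i) ξ = ContinuousLinearMap.proj i :=
    (hasFDerivAt_apply i ξ).fderiv
  ext i j
  rw [jacF₀_apply]
  fin_cases i <;> fin_cases j <;>
    simp (disch := fun_prop) [F₀, div_eq_mul_inv, fderiv_fun_sub, fderiv_fun_add, fderiv_fun_neg,
      fderiv_fun_mul, fderiv_fun_pow, fderiv_coord, Pi.single_apply] <;>
    ring

lemma dotProduct_lyapunovMatrix_mulVec (ξ : Fin 3 → ℝ) (lam : ℝ) (v : Fin 3 → ℝ) :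
    dotProduct ((P * JacF₀ ξ + (JacF₀ ξ)ᵀ * P + lam • P).mulVec v) v =
      2 * (ξ 0 * v 0 + ξ 1 * v 1)^2
        - (lam + 2 - 3 * (ξ 2)^2 - ((ξ 0)^2 + (ξ 1)^2)) * ((v 0)^2 + (v 1)^2)
        - (2 + 3 * ((ξ 0)^2 + (ξ 1)^2 + (ξ 2)^2) - lam) * (v 2)^2 := by
  rw [jacF₀_eq]
  simp [P, dotProduct, mulVec, Matrix.mul_apply, Fin.sum_univ_three]
  ring

/-- For every `ξ ∈ ℝ³` and every real `λ` with
`3(x²+y²+z²) − 2 < λ < 3(x²+y²+z²) + 2`, the symmetric matrix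
`P·DF₀(ξ) + DF₀(ξ)ᵀ·P + λ·P` is negative definite. -/
theorem stmt10 (ξ : Fin 3 → ℝ) (lam : ℝ)
    (h1 : 3 * ((ξ 0)^2 + (ξ 1)^2 + (ξ 2)^2) - 2 < lam)
    (h2 : lam < 3 * ((ξ 0)^2 + (ξ 1)^2 + (ξ 2)^2) + 2) :
    ∀ v : Fin 3 → ℝ, v ≠ 0 →
      dotProduct ((P * JacF₀ ξ + (JacF₀ ξ)ᵀ * P + lam • P).mulVec v) v < 0 := by
  intro v hv
  have cauchy_schwarz : (ξ 0 * v 0 + ξ 1 * v 1)^2 ≤ ((ξ 0)^2 + (ξ 1)^2) * ((v 0)^2 + (v 1)^2) := by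
    nlinarith [sq_nonneg (ξ 0 * v 1 - ξ 1 * v 0)]
  have hv_pos : 0 < (v 0)^2 + (v 1)^2 + (v 2)^2 := by
    simpa [dotProduct, Fin.sum_univ_three, ← sq] using dotProduct_star_self_pos_iff.mpr hv
  have hw : 0 ≤ (v 0)^2 + (v 1)^2 := by positivity
  have margin_pos : 0 < (lam - (3 * ((ξ 0)^2 + (ξ 1)^2 + (ξ 2)^2) - 2)) * ((v 0)^2 + (v 1)^2)
      + (3 * ((ξ 0)^2 + (ξ 1)^2 + (ξ 2)^2) + 2 - lam) * (v 2)^2 := by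
    rcases hw.eq_or_lt with hw0 | hw0
    · rw [← hw0, mul_zero, zero_add]
      exact mul_pos (sub_pos.mpr h2) (by linarith)
    · exact add_pos_of_pos_of_nonneg (mul_pos (sub_pos.mpr h1) hw0)
        (mul_nonneg (sub_pos.mpr h2).le (sq_nonneg _))
  rw [dotProduct_lyapunovMatrix_mulVec]
  linarith
end
end

section
/- Fix ε ∈ (0, 0.1) and let D = {(x,y,z,w) ∈ ℝ⁴ : |x| ≤ 4, |y| ≤ 4, |z| ≤ 4, |w| ≤ 16}. If (x,y,z,w) : [0,T] → ℝ⁴ is a differentiable curve satisfying x' = x − y − (3/2)xz² − x(x²+y²)/2 + εxw, y' = x + y − (3/2)yz² − y(x²+y²)/2 + εyw, z' = −z − z³/2 − (3/2)z(x²+y²) + εzw, ε·w' = −w + x + y + z on [0,T], and (x(0), y(0), z(0), w(0)) ∈ D, then (x(t), y(t), z(t), w(t)) ∈ D for all t ∈ [0,T]. That is, D is positively invariant for the system. -/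
open Set Filter Topology

lemma ev_lt_of_deriv_neg {f : ℝ → ℝ} {t₀ d : ℝ} (hf : HasDerivAt f d t₀)
    (hd : d < 0) : ∀ᶠ s in 𝓝[>] t₀, f s < f t₀ := by
  have h := hf.hasDerivWithinAt (s := Set.Ioi t₀)
  rw [hasDerivWithinAt_iff_tendsto_slope] at h
  rw [Set.diff_singleton_eq_self (by simp)] at h
  have h2 : ∀ᶠ s in 𝓝[>] t₀, slope f t₀ s < 0 := h.eventually (eventually_lt_nhds hd)
  filter_upwards [h2, self_mem_nhdsWithin] with s hs hs'
  have hst : (0:ℝ) < s - t₀ := sub_pos.mpr hs'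
  have hsl : (f s - f t₀) / (s - t₀) < 0 := by
    rwa [slope_def_field] at hs
  have := (div_lt_iff₀ hst).mp hsl
  linarith

lemma ev_le_boundary {f : ℝ → ℝ} {t₀ d c : ℝ} (hf : HasDerivAt f d t₀)
    (hle : f t₀ ≤ c) (hbd : f t₀ = c → d < 0) :
    ∀ᶠ s in 𝓝[>] t₀, f s ≤ c := by
  rcases eq_or_lt_of_le hle with heq | hlt
  · filter_upwards [ev_lt_of_deriv_neg hf (hbd heq)] with s hs
    exact le_of_lt (heq ▸ hs)
  · have h := hf.continuousAt.eventually_lt continuousAt_const hlt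
    exact (h.filter_mono nhdsWithin_le_nhds).mono fun s hs => hs.le

set_option maxHeartbeats 1600000 in
/-- The box `D = [−4,4]³ × [−16,16]` is positively invariant for the
singularly perturbed four-dimensional system with parameter `ε ∈ (0, 0.1)`. -/
theorem stmt14 (ε T : ℝ) (hε : 0 < ε) (hε' : ε < 0.1) (hT : 0 ≤ T)
    (x y z w : ℝ → ℝ)
    (hx : ∀ t ∈ Set.Icc (0:ℝ) T, HasDerivAt x
      (x t - y t - (3/2) * x t * (z t)^2 - x t * ((x t)^2 + (y t)^2) / 2 + ε * x t * w t) t)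
    (hy : ∀ t ∈ Set.Icc (0:ℝ) T, HasDerivAt y
      (x t + y t - (3/2) * y t * (z t)^2 - y t * ((x t)^2 + (y t)^2) / 2 + ε * y t * w t) t)
    (hz : ∀ t ∈ Set.Icc (0:ℝ) T, HasDerivAt z
      (-(z t) - (z t)^3 / 2 - (3/2) * z t * ((x t)^2 + (y t)^2) + ε * z t * w t) t)
    (hw : ∀ t ∈ Set.Icc (0:ℝ) T, HasDerivAt w
      ((-(w t) + x t + y t + z t) / ε) t)
    (h0 : |x 0| ≤ 4 ∧ |y 0| ≤ 4 ∧ |z 0| ≤ 4 ∧ |w 0| ≤ 16) :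
    ∀ t ∈ Set.Icc (0:ℝ) T, |x t| ≤ 4 ∧ |y t| ≤ 4 ∧ |z t| ≤ 4 ∧ |w t| ≤ 16 := by
  -- square versions
  have sq4 : ∀ a : ℝ, a ^ 2 ≤ 16 ↔ |a| ≤ 4 := by
    intro a
    constructor
    · intro h
      rw [abs_le]
      constructor <;> nlinarith [sq_nonneg (a + 4), sq_nonneg (a - 4)]
    · intro h
      nlinarith [sq_abs a, abs_nonneg a]
  have sq16 : ∀ a : ℝ, a ^ 2 ≤ 256 ↔ |a| ≤ 16 := by
    intro a
    constructor
    · intro h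
      rw [abs_le]
      constructor <;> nlinarith [sq_nonneg (a + 16), sq_nonneg (a - 16)]
    · intro h
      nlinarith [sq_abs a, abs_nonneg a]
  set Q : ℝ → Prop := fun s =>
    (x s) ^ 2 ≤ 16 ∧ (y s) ^ 2 ≤ 16 ∧ (z s) ^ 2 ≤ 16 ∧ (w s) ^ 2 ≤ 256 with hQ
  have hQ0 : Q 0 := ⟨(sq4 _).mpr h0.1, (sq4 _).mpr h0.2.1, (sq4 _).mpr h0.2.2.1,
    (sq16 _).mpr h0.2.2.2⟩
  set A : Set ℝ := {s | s ∈ Set.Icc (0:ℝ) T ∧ ∀ u ∈ Set.Icc (0:ℝ) s, Q u} with hA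
  have h0A : (0:ℝ) ∈ A := by
    refine ⟨⟨le_refl 0, hT⟩, ?_⟩
    intro u hu
    have : u = 0 := le_antisymm hu.2 hu.1
    rwa [this]
  have hAne : A.Nonempty := ⟨0, h0A⟩
  have hAbdd : BddAbove A := ⟨T, fun s hs => hs.1.2⟩
  set t₀ := sSup A with ht₀def
  have ht₀0 : 0 ≤ t₀ := le_csSup hAbdd h0A
  have ht₀T : t₀ ≤ T := csSup_le hAne fun s hs => hs.1.2
  have ht₀Icc : t₀ ∈ Set.Icc (0:ℝ) T := ⟨ht₀0, ht₀T⟩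
  -- Q holds on [0, t₀)
  have hQlt : ∀ u, 0 ≤ u → u < t₀ → Q u := by
    intro u hu0 hut
    obtain ⟨a, haA, hua⟩ := exists_lt_of_lt_csSup hAne hut
    exact haA.2 u ⟨hu0, hua.le⟩
  -- Q holds at t₀
  have hQt₀ : Q t₀ := by
    rcases eq_or_lt_of_le ht₀0 with h | h
    · rwa [← h]
    · have hne : (𝓝[<] t₀).NeBot := inferInstance
      have hmem : Set.Ico (0:ℝ) t₀ ∈ 𝓝[<] t₀ := Ico_mem_nhdsLT_of_mem ⟨h, le_refl _⟩
      have hev : ∀ᶠ u in 𝓝[<] t₀, Q u := by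
        filter_upwards [hmem] with u hu
        exact hQlt u hu.1 hu.2
      have hcx := (hx t₀ ht₀Icc).continuousAt
      have hcy := (hy t₀ ht₀Icc).continuousAt
      have hcz := (hz t₀ ht₀Icc).continuousAt
      have hcw := (hw t₀ ht₀Icc).continuousAt
      refine ⟨?_, ?_, ?_, ?_⟩
      · exact le_of_tendsto (((hcx.pow 2).tendsto).mono_left nhdsWithin_le_nhds)
          (hev.mono fun u hu => hu.1)
      · exact le_of_tendsto (((hcy.pow 2).tendsto).mono_left nhdsWithin_le_nhds)
          (hev.mono fun u hu => hu.2.1)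
      · exact le_of_tendsto (((hcz.pow 2).tendsto).mono_left nhdsWithin_le_nhds)
          (hev.mono fun u hu => hu.2.2.1)
      · exact le_of_tendsto (((hcw.pow 2).tendsto).mono_left nhdsWithin_le_nhds)
          (hev.mono fun u hu => hu.2.2.2)
  have hQle : ∀ u ∈ Set.Icc (0:ℝ) t₀, Q u := by
    intro u hu
    rcases eq_or_lt_of_le hu.2 with h | h
    · rwa [h]
    · exact hQlt u hu.1 h
  -- main: t₀ = T
  have ht₀eq : t₀ = T := by
    by_contra hne
    have hlt : t₀ < T := lt_of_le_of_ne ht₀T hne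
    obtain ⟨hx2, hy2, hz2, hw2⟩ := hQt₀
    obtain ⟨hwge, hwle⟩ := abs_le.mp ((sq16 _).mp hw2)
    obtain ⟨hxge, hxle⟩ := abs_le.mp ((sq4 _).mp hx2)
    obtain ⟨hyge, hyle⟩ := abs_le.mp ((sq4 _).mp hy2)
    obtain ⟨hzge, hzle⟩ := abs_le.mp ((sq4 _).mp hz2)
    have hεw : ε * w t₀ < 1.6 := by
      have h1 : ε * w t₀ ≤ ε * 16 := mul_le_mul_of_nonneg_left hwle hε.le
      have h2 : ε * 16 < 1.6 := by linarith
      linarith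
    -- eventual bounds for each coordinate
    have hevx : ∀ᶠ s in 𝓝[>] t₀, (x s) ^ 2 ≤ 16 := by
      refine ev_le_boundary ((hx t₀ ht₀Icc).pow 2) hx2 ?_
      intro heq
      have h4 : (x t₀ - 4) * (x t₀ + 4) = 0 := by linear_combination heq
      push_cast
      rcases mul_eq_zero.mp h4 with h | h
      · have hx4 : x t₀ = 4 := by linarith
        rw [hx4]
        nlinarith [sq_nonneg (4 * y t₀ + 1), sq_nonneg (z t₀), sq_nonneg (y t₀)]
      · have hx4 : x t₀ = -4 := by linarith
        rw [hx4]
        nlinarith [sq_nonneg (4 * y t₀ - 1), sq_nonneg (z t₀), sq_nonneg (y t₀)]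
    have hevy : ∀ᶠ s in 𝓝[>] t₀, (y s) ^ 2 ≤ 16 := by
      refine ev_le_boundary ((hy t₀ ht₀Icc).pow 2) hy2 ?_
      intro heq
      have h4 : (y t₀ - 4) * (y t₀ + 4) = 0 := by linear_combination heq
      push_cast
      rcases mul_eq_zero.mp h4 with h | h
      · have hy4 : y t₀ = 4 := by linarith
        rw [hy4]
        nlinarith [sq_nonneg (4 * x t₀ + 1), sq_nonneg (z t₀), sq_nonneg (x t₀)]
      · have hy4 : y t₀ = -4 := by linarith
        rw [hy4]
        nlinarith [sq_nonneg (4 * x t₀ - 1), sq_nonneg (z t₀), sq_nonneg (x t₀)]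
    have hevz : ∀ᶠ s in 𝓝[>] t₀, (z s) ^ 2 ≤ 16 := by
      refine ev_le_boundary ((hz t₀ ht₀Icc).pow 2) hz2 ?_
      intro heq
      have h4 : (z t₀ - 4) * (z t₀ + 4) = 0 := by linear_combination heq
      push_cast
      rcases mul_eq_zero.mp h4 with h | h
      · have hz4 : z t₀ = 4 := by linarith
        rw [hz4]
        nlinarith [sq_nonneg (x t₀), sq_nonneg (y t₀)]
      · have hz4 : z t₀ = -4 := by linarith
        rw [hz4]
        nlinarith [sq_nonneg (x t₀), sq_nonneg (y t₀)]
    have hevw : ∀ᶠ s in 𝓝[>] t₀, (w s) ^ 2 ≤ 256 := by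
      refine ev_le_boundary ((hw t₀ ht₀Icc).pow 2) hw2 ?_
      intro heq
      have h4 : (w t₀ - 16) * (w t₀ + 16) = 0 := by linear_combination heq
      have hnum : 2 * w t₀ * (-(w t₀) + x t₀ + y t₀ + z t₀) < 0 := by
        rcases mul_eq_zero.mp h4 with h | h
        · have hw16 : w t₀ = 16 := by linarith
          rw [hw16]; linarith
        · have hw16 : w t₀ = -16 := by linarith
          rw [hw16]; linarith
      have heq2 : ((2:ℕ):ℝ) * w t₀ ^ (2-1) * ((-(w t₀) + x t₀ + y t₀ + z t₀) / ε)
          = (2 * w t₀ * (-(w t₀) + x t₀ + y t₀ + z t₀)) / ε := by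
        push_cast; ring
      rw [heq2]
      exact div_neg_of_neg_of_pos hnum hε
    have hev : ∀ᶠ s in 𝓝[>] t₀, Q s := by
      filter_upwards [hevx, hevy, hevz, hevw] with s h1 h2 h3 h4
      exact ⟨h1, h2, h3, h4⟩
    rw [eventually_nhdsWithin_iff] at hev
    obtain ⟨δ, hδ, hball⟩ := Metric.eventually_nhds_iff.mp hev
    set s := min (t₀ + δ / 2) T with hs
    have hst₀ : t₀ < s := lt_min (by linarith) hlt
    have hsA : s ∈ A := by
      refine ⟨⟨le_trans ht₀0 hst₀.le, min_le_right _ _⟩, ?_⟩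
      intro u hu
      rcases le_or_gt u t₀ with h | h
      · exact hQle u ⟨hu.1, h⟩
      · refine hball ?_ h
        have hums : u ≤ t₀ + δ / 2 := le_trans hu.2 (min_le_left _ _)
        rw [Real.dist_eq, abs_lt]
        constructor <;> linarith
    have : s ≤ t₀ := le_csSup hAbdd hsA
    linarith
  intro t ht
  have hQt : Q t := hQle t ⟨ht.1, ht₀eq ▸ ht.2⟩
  exact ⟨(sq4 _).mp hQt.1, (sq4 _).mp hQt.2.1, (sq4 _).mp hQt.2.2.1, (sq16 _).mp hQt.2.2.2⟩
end

section
/- Let P = diag(−1, −1, 1), let A : [0,T] → M₃(ℝ) and λ : [0,T] → ℝ be continuous, and suppose that for every t ∈ [0,T] the symmetric matrix P·A(t) + A(t)ᵀ·P + λ(t)·P is negative definite. Let v : [0,T] → ℝ³ be differentiable with v'(t) = A(t)v(t), v(0) ≠ 0, and ⟨Pv(0), v(0)⟩ ≤ 0. Then ⟨Pv(t), v(t)⟩ < 0 for every t ∈ (0,T]. -/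
/-!
Along a solution, `Q(t) = ⟨P v(t), v(t)⟩` satisfies
`Q' + λ Q = ⟨(P A + Aᵀ P + λ P) v, v⟩ ≤ 0`, strictly where `v ≠ 0`. With the integrating
factor `E = exp ∫ λ > 0`, the product `Q E` is thus nonincreasing on `[0, T]` and, because
`v(0) ≠ 0`, strictly decreasing at `0`; since `Q(0) E(0) ≤ 0`, it is negative on `(0, T]`,
and so is `Q`.
-/

open Matrix

noncomputable section

open Set Filter

section QuadraticForm

variable {𝕜 : Type*} [NontriviallyNormedField 𝕜] {m n : Type*} [Fintype n]

theorem HasDerivAt.mulVec {v : 𝕜 → n → 𝕜} {v' : n → 𝕜} {t : 𝕜} (M : Matrix m n 𝕜)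
    (hv : HasDerivAt v v' t) : HasDerivAt (fun s => M *ᵥ v s) (M *ᵥ v') t :=
  hasDerivAt_pi.2 fun i =>
    HasDerivAt.fun_sum fun j _ => (hasDerivAt_pi.1 hv j).const_mul (M i j)

theorem HasDerivAt.dotProduct {u v : 𝕜 → n → 𝕜} {u' v' : n → 𝕜} {t : 𝕜}
    (hu : HasDerivAt u u' t) (hv : HasDerivAt v v' t) :
    HasDerivAt (fun s => u s ⬝ᵥ v s) (u' ⬝ᵥ v t + u t ⬝ᵥ v') t := by
  simpa only [_root_.dotProduct, ← Finset.sum_add_distrib] using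
    HasDerivAt.fun_sum (u := Finset.univ) fun i _ =>
      (hasDerivAt_pi.1 hu i).fun_mul (hasDerivAt_pi.1 hv i)

theorem dotProduct_mulVec_mulVec_add {R : Type*} [CommRing R] (M A : Matrix n n R)
    (x : n → R) :
    M *ᵥ (A *ᵥ x) ⬝ᵥ x + M *ᵥ x ⬝ᵥ A *ᵥ x = (M * A + Aᵀ * M) *ᵥ x ⬝ᵥ x := by
  rw [add_mulVec, add_dotProduct, ← mulVec_mulVec, ← mulVec_mulVec, mulVec_transpose,
    ← dotProduct_mulVec, dotProduct_comm (M *ᵥ x)]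

theorem HasDerivAt.dotProduct_mulVec_self {v : 𝕜 → n → 𝕜} {A M : Matrix n n 𝕜} {t : 𝕜}
    (hv : HasDerivAt v (A *ᵥ v t) t) :
    HasDerivAt (fun s => M *ᵥ v s ⬝ᵥ v s) ((M * A + Aᵀ * M) *ᵥ v t ⬝ᵥ v t) t := by
  simpa only [dotProduct_mulVec_mulVec_add] using (hv.mulVec M).dotProduct hv

end QuadraticForm

theorem exists_pos_hasDerivAt_eq_mul {a b : ℝ} (hab : a ≤ b) {c : ℝ → ℝ}
    (hc : ContinuousOn c (Icc a b)) :
    ∃ E : ℝ → ℝ, (∀ s, 0 < E s) ∧ ∀ s ∈ Icc a b, HasDerivAt E (c s * E s) s := by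
  set c' : ℝ → ℝ := fun s => c (projIcc a b hab s)
  have hc' : Continuous c' :=
    hc.comp_continuous (continuous_subtype_val.comp continuous_projIcc) fun s =>
      (projIcc a b hab s).2
  refine ⟨fun s => Real.exp (∫ r in a..s, c' r), fun s => Real.exp_pos _, fun s hs => ?_⟩
  have := ((hc'.integral_hasStrictDerivAt a s).hasDerivAt).exp
  simpa [c', projIcc_of_mem hab hs, mul_comm] using this

theorem AntitoneOn.lt_of_hasDerivWithinAt_neg {g : ℝ → ℝ} {a t g' : ℝ} (hat : a < t)
    (hg : AntitoneOn g (Icc a t)) (hd : HasDerivWithinAt g g' (Ioo a t) a) (hneg : g' < 0) :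
    g t < g a := by
  by_contra! hle
  have hconst : ∀ x ∈ Ioo a t, g x = g a := fun x hx =>
    le_antisymm (hg (left_mem_Icc.2 hat.le) (Ioo_subset_Icc_self hx) hx.1.le)
      (hle.trans (hg (Ioo_subset_Icc_self hx) (right_mem_Icc.2 hat.le) hx.2.le))
  have hmono : MonotoneOn g (Ioo a t) := fun x hx y hy _ => by rw [hconst x hx, hconst y hy]
  have hacc : AccPt a (𝓟 (Ioo a t)) := by
    rw [accPt_principal_iff_nhdsWithin, sdiff_singleton_eq_self fun h => lt_irrefl a h.1]
    exact left_nhdsWithin_Ioo_neBot hat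
  exact hneg.not_ge (hd.nonneg_of_monotoneOn hacc hmono)

theorem neg_of_hasDerivAt_add_mul_nonpos {a b : ℝ} {f f' c : ℝ → ℝ}
    (hc : ContinuousOn c (Icc a b)) (hf : ∀ s ∈ Icc a b, HasDerivAt f (f' s) s)
    (hle : ∀ s ∈ Icc a b, f' s + c s * f s ≤ 0) (hlt : f' a + c a * f a < 0) (ha : f a ≤ 0) :
    ∀ t ∈ Ioc a b, f t < 0 := by
  rintro t ⟨hat, htb⟩
  obtain ⟨E, hEpos, hE⟩ := exists_pos_hasDerivAt_eq_mul (hat.le.trans htb) hc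
  have hR : ∀ s ∈ Icc a b, HasDerivAt (fun s => f s * E s) (E s * (f' s + c s * f s)) s :=
    fun s hs => ((hf s hs).mul (hE s hs)).congr_deriv (by ring)
  have hanti : AntitoneOn (fun s => f s * E s) (Icc a b) := by
    refine antitoneOn_of_hasDerivWithinAt_nonpos (convex_Icc a b)
      (fun s hs => (hR s hs).continuousAt.continuousWithinAt)
      (fun s hs => (hR s (interior_subset hs)).hasDerivWithinAt) fun s hs => ?_
    exact mul_nonpos_of_nonneg_of_nonpos (hEpos s).le (hle s (interior_subset hs))
  have hRt : f t * E t < f a * E a :=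
    (hanti.mono (Icc_subset_Icc_right htb)).lt_of_hasDerivWithinAt_neg hat
      (hR a (left_mem_Icc.2 (hat.le.trans htb))).hasDerivWithinAt
      (mul_neg_of_pos_of_neg (hEpos a) hlt)
  have hRa : f a * E a ≤ 0 := mul_nonpos_of_nonpos_of_nonneg ha (hEpos a).le
  exact neg_of_mul_neg_left (hRt.trans_le hRa) (hEpos t).le

theorem stmt15_general (T : ℝ) (A : ℝ → Matrix (Fin 3) (Fin 3) ℝ) (lam : ℝ → ℝ)
    (hlam : ContinuousOn lam (Set.Icc 0 T))
    (hneg : ∀ t ∈ Set.Icc (0:ℝ) T, ∀ u : Fin 3 → ℝ, u ≠ 0 →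
      dotProduct ((P * A t + (A t)ᵀ * P + lam t • P).mulVec u) u < 0)
    (v : ℝ → Fin 3 → ℝ)
    (hv : ∀ t ∈ Set.Icc (0:ℝ) T, HasDerivAt v ((A t).mulVec (v t)) t)
    (hv0 : v 0 ≠ 0)
    (hc : dotProduct (P.mulVec (v 0)) (v 0) ≤ 0) :
    ∀ t ∈ Set.Ioc (0:ℝ) T, dotProduct (P.mulVec (v t)) (v t) < 0 := by
  intro t ht
  have hsplit : ∀ s, (P * A s + (A s)ᵀ * P) *ᵥ v s ⬝ᵥ v s + lam s * (P *ᵥ v s ⬝ᵥ v s) =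
      (P * A s + (A s)ᵀ * P + lam s • P) *ᵥ v s ⬝ᵥ v s := fun s => by
    rw [add_mulVec _ (lam s • P), add_dotProduct, smul_mulVec, smul_dotProduct, smul_eq_mul]
  refine neg_of_hasDerivAt_add_mul_nonpos hlam (fun s hs => (hv s hs).dotProduct_mulVec_self)
    (fun s hs => ?_) ?_ hc t ht
  · rw [hsplit]
    rcases eq_or_ne (v s) 0 with h | h
    · simp [h]
    · exact (hneg s hs _ h).le
  · rw [hsplit]
    exact hneg 0 ⟨le_rfl, ht.1.le.trans ht.2⟩ _ hv0

/-- quadratic Lyapunov function argument. If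
`P·A(t) + A(t)ᵀ·P + λ(t)·P` is negative definite for all `t ∈ [0,T]`, and `v`
solves `v' = A(t)v` with `v(0) ≠ 0`, `⟨Pv(0), v(0)⟩ ≤ 0`, then
`⟨Pv(t), v(t)⟩ < 0` for `t ∈ (0,T]`. -/
theorem stmt15 (T : ℝ) (A : ℝ → Matrix (Fin 3) (Fin 3) ℝ) (lam : ℝ → ℝ)
    (hA : ContinuousOn A (Set.Icc 0 T)) (hlam : ContinuousOn lam (Set.Icc 0 T))
    (hneg : ∀ t ∈ Set.Icc (0:ℝ) T, ∀ u : Fin 3 → ℝ, u ≠ 0 →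
      dotProduct ((P * A t + (A t)ᵀ * P + lam t • P).mulVec u) u < 0)
    (v : ℝ → Fin 3 → ℝ)
    (hv : ∀ t ∈ Set.Icc (0:ℝ) T, HasDerivAt v ((A t).mulVec (v t)) t)
    (hv0 : v 0 ≠ 0)
    (hc : dotProduct (P.mulVec (v 0)) (v 0) ≤ 0) :
    ∀ t ∈ Set.Ioc (0:ℝ) T, dotProduct (P.mulVec (v t)) (v t) < 0 :=
  stmt15_general T A lam hlam hneg v hv hv0 hc
end
end

section
/- Let P = diag(−1, −1, 1), C = {ξ ∈ ℝ³ : ⟨Pξ, ξ⟩ ≤ 0}, v₊ = (0,0,1), and K = {ξ ∈ ℝ³ : ⟨Pξ, ξ⟩ ≥ 0 and ⟨ξ, v₊⟩ ≥ 0}. Let ψ : ℝ × ℝ³ → ℝ³ be a continuous flow, i.e., ψ is continuous, ψ(0, ·) = id, and ψ(t+s, ·) = ψ(t, ψ(s, ·)) for all s, t ∈ ℝ. Then the following are equivalent: (i) ψ is strongly monotone with respect to C, i.e., for all p ≠ q with q − p ∈ C and all t > 0, ψ(t,q) − ψ(t,p) ∈ Int C; (ii) ψ is strongly competitive with respect to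 K, i.e., for all p, q and all t > 0, if ψ(t,q) − ψ(t,p) ∈ K \ {0} then q − p ∈ Int K. -/
open Matrix

noncomputable section

/-- The cone `C = {ξ ∈ ℝ³ : ⟨Pξ, ξ⟩ ≤ 0}` of rank 2. -/
def C : Set (Fin 3 → ℝ) := {ξ | dotProduct (P.mulVec ξ) ξ ≤ 0}

/-- `v₊ = (0,0,1)`, the eigenvector of `P` with eigenvalue `1`. -/
def vPlus : Fin 3 → ℝ := ![0, 0, 1]

/-- The convex cone `K = {ξ ∈ ℝ³ : ⟨Pξ, ξ⟩ ≥ 0 and ⟨ξ, v₊⟩ ≥ 0}`. -/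
def K : Set (Fin 3 → ℝ) :=
  {ξ | 0 ≤ dotProduct (P.mulVec ξ) ξ ∧ 0 ≤ dotProduct ξ vPlus}

def Q (ξ : Fin 3 → ℝ) : ℝ := ξ 2 * ξ 2 - ξ 0 * ξ 0 - ξ 1 * ξ 1

lemma Q_eq (ξ : Fin 3 → ℝ) : dotProduct (P.mulVec ξ) ξ = Q ξ := by
  simp [P, Matrix.mulVec_diagonal, dotProduct, Fin.sum_univ_three, Q]
  ring

lemma dot_vPlus (ξ : Fin 3 → ℝ) : dotProduct ξ vPlus = ξ 2 := by
  simp [vPlus, dotProduct, Fin.sum_univ_three]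

lemma C_eq : C = {ξ | Q ξ ≤ 0} := by
  ext ξ; simp only [C, Set.mem_setOf_eq, Q_eq]

lemma K_eq : K = {ξ | 0 ≤ Q ξ ∧ 0 ≤ ξ 2} := by
  ext ξ; simp only [K, Set.mem_setOf_eq, Q_eq, dot_vPlus]

lemma contQ : Continuous Q := by
  unfold Q; fun_prop

lemma update_mem_ball (ξ : Fin 3 → ℝ) (v : ℝ) (ε : ℝ) (hε : 0 < ε)
    (hv : |v - ξ 2| ≤ ε / 2) : Function.update ξ 2 v ∈ Metric.ball ξ ε := by
  rw [Metric.mem_ball]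
  have : dist (Function.update ξ 2 v) ξ ≤ ε / 2 := by
    rw [dist_pi_le_iff (by linarith)]
    intro i
    by_cases h : i = 2
    · subst h; simpa [Real.dist_eq] using hv
    · simp [Function.update_of_ne h, dist_self]; linarith
  linarith

lemma Q_update (ξ : Fin 3 → ℝ) (v : ℝ) :
    Q (Function.update ξ 2 v) = v * v - ξ 0 * ξ 0 - ξ 1 * ξ 1 := by
  simp [Q, Function.update_of_ne (show (0:Fin 3) ≠ 2 by decide),
    Function.update_of_ne (show (1:Fin 3) ≠ 2 by decide)]

lemma mem_interior_C (ξ : Fin 3 → ℝ) : ξ ∈ interior C ↔ Q ξ < 0 := by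
  constructor
  · intro h
    have hle : Q ξ ≤ 0 := by have := interior_subset h; rwa [C_eq] at this
    rcases lt_or_eq_of_le hle with h' | h'
    · exact h'
    · exfalso
      rcases Metric.isOpen_iff.1 isOpen_interior ξ h with ⟨ε, hε, hball⟩
      -- perturb third coordinate outward
      set v : ℝ := ξ 2 + (if 0 ≤ ξ 2 then ε / 2 else -(ε / 2)) with hvdef
      have hvmem : Function.update ξ 2 v ∈ Metric.ball ξ ε := by
        apply update_mem_ball ξ v ε hε
        rw [hvdef]
        have h2 : (ξ 2 + (if 0 ≤ ξ 2 then ε / 2 else -(ε / 2))) - ξ 2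
            = if 0 ≤ ξ 2 then ε / 2 else -(ε / 2) := by ring
        rw [h2]
        split <;> (rw [abs_le]; constructor <;> linarith)
      have hC : Function.update ξ 2 v ∈ C := interior_subset (hball hvmem)
      rw [C_eq] at hC
      simp only [Set.mem_setOf_eq, Q_update] at hC
      have hQ0 : ξ 0 * ξ 0 + ξ 1 * ξ 1 = ξ 2 * ξ 2 := by
        have : Q ξ = 0 := h'; unfold Q at this; linarith
      have : ξ 2 * ξ 2 < v * v := by
        rw [hvdef]; split <;> rename_i hsign <;> nlinarith
      linarith
  · intro h
    have hopen : IsOpen {ξ : Fin 3 → ℝ | Q ξ < 0} := isOpen_lt contQ continuous_const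
    have hsub : {ξ : Fin 3 → ℝ | Q ξ < 0} ⊆ C := by
      rw [C_eq]; intro x hx
      simp only [Set.mem_setOf_eq] at hx ⊢; exact le_of_lt hx
    exact interior_maximal hsub hopen h

lemma mem_interior_K (ξ : Fin 3 → ℝ) : ξ ∈ interior K ↔ 0 < Q ξ ∧ 0 < ξ 2 := by
  constructor
  · intro h
    have hle : 0 ≤ Q ξ ∧ 0 ≤ ξ 2 := by have := interior_subset h; rwa [K_eq] at this
    rcases Metric.isOpen_iff.1 isOpen_interior ξ h with ⟨ε, hε, hball⟩
    have hz : 0 < ξ 2 := by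
      rcases lt_or_eq_of_le hle.2 with h' | h'
      · exact h'
      · exfalso
        have hvmem : Function.update ξ 2 (-(ε/2)) ∈ Metric.ball ξ ε := by
          apply update_mem_ball ξ _ ε hε
          rw [← h', sub_zero, abs_le]; constructor <;> linarith
        have hK : Function.update ξ 2 (-(ε/2)) ∈ K := interior_subset (hball hvmem)
        rw [K_eq] at hK
        have := hK.2
        simp only [Set.mem_setOf_eq, Function.update_self] at this
        linarith
    refine ⟨?_, hz⟩
    rcases lt_or_eq_of_le hle.1 with h' | h'
    · exact h'
    · exfalso
      set δ : ℝ := min (ε/2) (ξ 2) with hδdef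
      have hδpos : 0 < δ := lt_min (by linarith) hz
      have hδle : δ ≤ ξ 2 := min_le_right _ _
      have hvmem : Function.update ξ 2 (ξ 2 - δ) ∈ Metric.ball ξ ε := by
        apply update_mem_ball ξ _ ε hε
        have h1 : δ ≤ ε/2 := min_le_left _ _
        rw [abs_le]; constructor <;> linarith
      have hK : Function.update ξ 2 (ξ 2 - δ) ∈ K := interior_subset (hball hvmem)
      rw [K_eq] at hK
      have h2 : 0 ≤ Q (Function.update ξ 2 (ξ 2 - δ)) := hK.1
      rw [Q_update] at h2
      have hQ0 : ξ 0 * ξ 0 + ξ 1 * ξ 1 = ξ 2 * ξ 2 := by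
        have : Q ξ = 0 := h'.symm; unfold Q at this; linarith
      nlinarith
  · intro h
    have hopen : IsOpen {ξ : Fin 3 → ℝ | 0 < Q ξ ∧ 0 < ξ 2} := by
      apply IsOpen.inter (isOpen_lt continuous_const contQ)
        (isOpen_lt continuous_const (continuous_apply 2))
    have hsub : {ξ : Fin 3 → ℝ | 0 < Q ξ ∧ 0 < ξ 2} ⊆ K := by
      rw [K_eq]; intro x hx
      simp only [Set.mem_setOf_eq] at hx ⊢
      exact ⟨le_of_lt hx.1, le_of_lt hx.2⟩
    exact interior_maximal hsub hopen h

lemma mem_K_diff (ξ : Fin 3 → ℝ) (h : ξ ∈ K \ {0}) : 0 ≤ Q ξ ∧ 0 < ξ 2 := by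
  obtain ⟨hK, hne⟩ := h
  rw [K_eq] at hK
  simp only [Set.mem_setOf_eq] at hK
  refine ⟨hK.1, ?_⟩
  rcases lt_or_eq_of_le hK.2 with h' | h'
  · exact h'
  · exfalso
    apply hne
    have hQ := hK.1
    unfold Q at hQ
    rw [← h'] at hQ
    have h0 : ξ 0 = 0 := by nlinarith
    have h1 : ξ 1 = 0 := by nlinarith
    have : ξ = 0 := by
      funext i; fin_cases i <;> simp [h0, h1, ← h']
    simp [this]

/-- for a continuous flow `ψ` on ℝ³, strong monotonicity with respect
to `C` is equivalent to strong competitiveness with respect to `K`. -/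
theorem stmt16 (ψ : ℝ → (Fin 3 → ℝ) → (Fin 3 → ℝ))
    (hcont : Continuous fun p : ℝ × (Fin 3 → ℝ) => ψ p.1 p.2)
    (h0 : ∀ x, ψ 0 x = x)
    (hgroup : ∀ s t : ℝ, ∀ x, ψ (t + s) x = ψ t (ψ s x)) :
    (∀ p q : Fin 3 → ℝ, p ≠ q → q - p ∈ C → ∀ t : ℝ, 0 < t →
        ψ t q - ψ t p ∈ interior C) ↔
    (∀ p q : Fin 3 → ℝ, ∀ t : ℝ, 0 < t →
        ψ t q - ψ t p ∈ K \ {0} → q - p ∈ interior K) := by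
  have hinj : ∀ t : ℝ, Function.Injective (ψ t) := by
    intro t a b hab
    have h : ψ (-t + t) a = ψ (-t + t) b := by
      rw [hgroup t (-t) a, hgroup t (-t) b, hab]
    rw [show -t + t = 0 by ring, h0, h0] at h
    exact h
  constructor
  · intro hmono p q t ht hwt
    obtain ⟨hQt, hzt⟩ := mem_K_diff _ hwt
    have hpq : p ≠ q := by
      rintro rfl
      exact hwt.2 (by simp)
    have hQw : 0 < Q (q - p) := by
      by_contra hle
      push_neg at hle
      have hCmem : q - p ∈ C := by rw [C_eq]; exact hle
      have := (mem_interior_C _).1 (hmono p q hpq hCmem t ht)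
      linarith
    rw [mem_interior_K]
    refine ⟨hQw, ?_⟩
    have hz0 : (q - p) 2 ≠ 0 := by
      intro h
      unfold Q at hQw
      rw [h] at hQw
      nlinarith
    rcases lt_or_gt_of_ne hz0 with hneg | hpos
    · exfalso
      -- IVT
      set f : ℝ → ℝ := fun s => (ψ s q - ψ s p) 2 with hfdef
      have hf : Continuous f := by
        apply Continuous.sub <;>
        · apply (continuous_apply 2).comp
          exact hcont.comp (continuous_id.prodMk continuous_const)
      have hf0 : f 0 < 0 := by simpa [hfdef, h0] using hneg
      have hft : 0 < f t := by simpa [hfdef] using hzt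
      have := intermediate_value_Ioo (le_of_lt ht) hf.continuousOn
      obtain ⟨s, hs, hfs⟩ := this (show (0:ℝ) ∈ Set.Ioo (f 0) (f t) from ⟨hf0, hft⟩)
      have hne' : ψ s p ≠ ψ s q := fun h => hpq (hinj s h)
      have hCs : ψ s q - ψ s p ∈ C := by
        rw [C_eq]
        simp only [Set.mem_setOf_eq]
        have h2 : (ψ s q - ψ s p) 2 = 0 := hfs
        unfold Q
        rw [h2]
        nlinarith [mul_self_nonneg ((ψ s q - ψ s p) 0), mul_self_nonneg ((ψ s q - ψ s p) 1)]
      have hres := hmono (ψ s p) (ψ s q) hne' hCs (t - s) (by linarith [hs.2])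
      have hq' : ψ (t - s) (ψ s q) = ψ t q := by
        rw [← hgroup s (t - s) q]; ring_nf
      have hp' : ψ (t - s) (ψ s p) = ψ t p := by
        rw [← hgroup s (t - s) p]; ring_nf
      rw [hq', hp'] at hres
      have := (mem_interior_C _).1 hres
      linarith
    · exact hpos
  · intro hcomp p q hpq hC t ht
    rw [mem_interior_C]
    by_contra hge
    push_neg at hge
    have hne : ψ t q - ψ t p ≠ 0 := by
      intro h
      apply hpq
      apply hinj t
      have : ψ t q = ψ t p := by
        have := sub_eq_zero.1 h; exact this
      exact this.symm
    have hQC : Q (q - p) ≤ 0 := by rw [C_eq] at hC; exact hC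
    rcases le_or_gt 0 ((ψ t q - ψ t p) 2) with hz | hz
    · have : ψ t q - ψ t p ∈ K \ {0} := by
        refine ⟨?_, hne⟩
        rw [K_eq]; exact ⟨hge, hz⟩
      have := (mem_interior_K _).1 (hcomp p q t ht this)
      linarith [this.1]
    · have hKmem : ψ t p - ψ t q ∈ K \ {0} := by
        constructor
        · rw [K_eq]
          have e1 : Q (ψ t p - ψ t q) = Q (ψ t q - ψ t p) := by
            unfold Q; simp only [Pi.sub_apply]; ring
          have e2 : (ψ t p - ψ t q) 2 = -((ψ t q - ψ t p) 2) := by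
            simp only [Pi.sub_apply]; ring
          refine ⟨by rw [e1]; exact hge, by rw [e2]; linarith⟩
        · intro h
          apply hne
          simp only [Set.mem_singleton_iff] at h
          have := neg_eq_zero.2 h
          rw [neg_sub] at this
          exact this
      have := (mem_interior_K _).1 (hcomp q p t ht hKmem)
      have hQpq : Q (p - q) = Q (q - p) := by
        unfold Q; simp only [Pi.sub_apply]; ring
      have h1 := this.1
      rw [hQpq] at h1
      linarith
end
end
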